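/- For every γ ≥ 0, the value function V_γ of the obstacle problem is semiconcave with linear modulus on every compact subset of ℝ²: for every compact convex set C ⊂ ℝ² there exists a constant K ≥ 0 such that for all x, y ∈ C and all λ ∈ [0,1], λ V_γ(x) + (1−λ) V_γ(y) − V_γ(λ x + (1−λ) y) ≤ K λ(1−λ) |x − y|². -/

import Mathlib

open MeasureTheory Set Filter Metric
open scoped RealInnerProductSpace ENNReal NNReal Topology

noncomputable section

/-- The bump profile `ψ(s) = exp(-1/(1-s²))` for `|s| < 1` and `0` otherwise. -/
def bump (s : ℝ) : ℝ := if |s| < 1 then Real.exp (-(1 / (1 - s ^ 2))) else 0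

/-- The obstacle function `ψ̃(y) = ψ(|y - z|/σ)`. -/
def psit (z : EuclideanSpace ℝ (Fin 2)) (σ : ℝ) (y : EuclideanSpace ℝ (Fin 2)) : ℝ :=
  bump (‖y - z‖ / σ)

/-- The running cost `ℓ_γ(y) = (1/2)|y|²(1 + γ ψ̃(y))`. -/
def runCost (z : EuclideanSpace ℝ (Fin 2)) (σ γ : ℝ) (y : EuclideanSpace ℝ (Fin 2)) : ℝ :=
  1 / 2 * ‖y‖ ^ 2 * (1 + γ * psit z σ y)

/-- `S = sup_{y ∈ closedBall z σ} ( 2|y| |∇ψ̃(y)| + (1/2)|y|² ‖∇²ψ̃(y)‖ )`. -/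
def Sconst (z : EuclideanSpace ℝ (Fin 2)) (σ : ℝ) : ℝ :=
  sSup ((fun y => 2 * ‖y‖ * ‖gradient (psit z σ) y‖
    + 1 / 2 * ‖y‖ ^ 2 * ‖iteratedFDeriv ℝ 2 (psit z σ) y‖) '' Metric.closedBall z σ)

/-- The threshold `γ_s = 1/S`. -/
def gammaS (z : EuclideanSpace ℝ (Fin 2)) (σ : ℝ) : ℝ := 1 / Sconst z σ

/-- The trajectory of `y' = u`, `y(0) = y₀`. -/
def traj (y₀ : EuclideanSpace ℝ (Fin 2)) (u : ℝ → EuclideanSpace ℝ (Fin 2)) (t : ℝ) :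
    EuclideanSpace ℝ (Fin 2) :=
  y₀ + ∫ s in (0 : ℝ)..t, u s

/-- Cost of the control `u` for the obstacle problem (with values in `ℝ≥0∞`). -/
def obsCost (z : EuclideanSpace ℝ (Fin 2)) (σ γ β : ℝ) (y₀ : EuclideanSpace ℝ (Fin 2))
    (u : ℝ → EuclideanSpace ℝ (Fin 2)) : ℝ≥0∞ :=
  ∫⁻ t in Ioi (0 : ℝ), ENNReal.ofReal (runCost z σ γ (traj y₀ u t) + β / 2 * ‖u t‖ ^ 2)

/-- The value function `V_γ` of the obstacle problem (with values in `ℝ≥0∞`). -/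
def Vgamma (z : EuclideanSpace ℝ (Fin 2)) (σ γ β : ℝ) (y₀ : EuclideanSpace ℝ (Fin 2)) : ℝ≥0∞ :=
  ⨅ (u : ℝ → EuclideanSpace ℝ (Fin 2)) (_ : MemLp u 2 (volume.restrict (Ioi 0))),
    obsCost z σ γ β y₀ u

/-- The real-valued value function of the obstacle problem. -/
def VgammaR (z : EuclideanSpace ℝ (Fin 2)) (σ γ β : ℝ) (y₀ : EuclideanSpace ℝ (Fin 2)) : ℝ :=
  (Vgamma z σ γ β y₀).toReal

end

noncomputable section

lemma bump_eq (s : ℝ) : bump s = expNegInvGlue (1 - s ^ 2) := by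
  unfold bump expNegInvGlue
  rcases lt_or_ge (|s|) 1 with h | h
  · have h2 : s ^ 2 < 1 := by
      have := abs_lt.1 h; nlinarith [this.1, this.2]
    rw [if_pos h, if_neg (by linarith), one_div]
  · have h2 : (1:ℝ) ≤ s ^ 2 := by
      nlinarith [abs_nonneg s, sq_abs s]
    rw [if_neg (not_lt.2 h), if_pos (by linarith)]

lemma bump_nonneg (s : ℝ) : 0 ≤ bump s := by
  rw [bump_eq]; exact expNegInvGlue.nonneg _

lemma bump_le_one (s : ℝ) : bump s ≤ 1 := by
  rw [bump_eq]
  unfold expNegInvGlue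
  split_ifs with h
  · norm_num
  · push_neg at h
    rw [Real.exp_le_one_iff, neg_nonpos]
    exact inv_nonneg.2 h.le

lemma psit_eq (z : EuclideanSpace ℝ (Fin 2)) (σ : ℝ) :
    psit z σ = fun y => expNegInvGlue (1 - ‖y - z‖ ^ 2 / σ ^ 2) := by
  funext y
  rw [psit, bump_eq, div_pow]

lemma psit_nonneg (z : EuclideanSpace ℝ (Fin 2)) (σ : ℝ) (y : EuclideanSpace ℝ (Fin 2)) :
    0 ≤ psit z σ y := bump_nonneg _

lemma psit_le_one (z : EuclideanSpace ℝ (Fin 2)) (σ : ℝ) (y : EuclideanSpace ℝ (Fin 2)) :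
    psit z σ y ≤ 1 := bump_le_one _

lemma contDiff_psit (z : EuclideanSpace ℝ (Fin 2)) (σ : ℝ) {n : ℕ∞} :
    ContDiff ℝ n (psit z σ) := by
  rw [psit_eq]
  exact expNegInvGlue.contDiff.comp (contDiff_const.sub (((contDiff_norm_sq ℝ).comp (contDiff_id.sub contDiff_const)).div_const _))

lemma psit_zero_of (z : EuclideanSpace ℝ (Fin 2)) {σ : ℝ} (hσ : 0 < σ)
    {y : EuclideanSpace ℝ (Fin 2)} (h : σ ≤ ‖y - z‖) : psit z σ y = 0 := by
  rw [psit_eq]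
  apply expNegInvGlue.zero_of_nonpos
  have h2 : σ ^ 2 ≤ ‖y - z‖ ^ 2 := by nlinarith [norm_nonneg (y - z)]
  have : (1:ℝ) ≤ ‖y - z‖ ^ 2 / σ ^ 2 := (one_le_div (by positivity)).2 h2
  linarith


/-- the compactly supported part of the running cost -/
def obsF (z : EuclideanSpace ℝ (Fin 2)) (σ : ℝ) (y : EuclideanSpace ℝ (Fin 2)) : ℝ :=
  1 / 2 * ‖y‖ ^ 2 * psit z σ y

lemma runCost_eq (z : EuclideanSpace ℝ (Fin 2)) (σ γ : ℝ) (y : EuclideanSpace ℝ (Fin 2)) :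
    runCost z σ γ y = 1 / 2 * ‖y‖ ^ 2 + γ * obsF z σ y := by
  unfold runCost obsF; ring

lemma contDiff_obsF (z : EuclideanSpace ℝ (Fin 2)) (σ : ℝ) {n : ℕ∞} :
    ContDiff ℝ n (obsF z σ) :=
  ((contDiff_const.mul (contDiff_norm_sq ℝ)).mul (contDiff_psit z σ))

lemma hasCompactSupport_obsF (z : EuclideanSpace ℝ (Fin 2)) {σ : ℝ} (hσ : 0 < σ) :
    HasCompactSupport (obsF z σ) := by
  apply HasCompactSupport.intro (isCompact_closedBall z σ)
  intro y hy
  have : σ ≤ ‖y - z‖ := by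
    have := mem_closedBall_iff_norm.not.1 hy
    push_neg at this
    linarith
  simp [obsF, psit_zero_of z hσ this]


variable {E : Type*} [NormedAddCommGroup E] [InnerProductSpace ℝ E]

/-- second-order upper Taylor bound from Lipschitz gradient -/
lemma quad_upper {f : E → ℝ} (hf : Differentiable ℝ f) {L : ℝ≥0}
    (hL : LipschitzWith L (fderiv ℝ f)) (a v : E) :
    f (a + v) ≤ f a + fderiv ℝ f a v + L * ‖v‖ ^ 2 := by
  set g : E → ℝ := fun w => f w - fderiv ℝ f a w with hg
  have hgd : ∀ w, DifferentiableAt ℝ g w := fun w =>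
    (hf w).sub ((fderiv ℝ f a).differentiableAt)
  have hgf : ∀ w, fderiv ℝ g w = fderiv ℝ f w - fderiv ℝ f a := by
    intro w
    rw [hg]
    rw [fderiv_fun_sub (hf w) ((fderiv ℝ f a).differentiableAt), (fderiv ℝ f a).fderiv]
  have hbound : ∀ w ∈ closedBall a ‖v‖, ‖fderiv ℝ g w‖ ≤ (L : ℝ) * ‖v‖ := by
    intro w hw
    rw [hgf]
    have := hL.dist_le_mul w a
    rw [dist_eq_norm, dist_eq_norm] at this
    calc ‖fderiv ℝ f w - fderiv ℝ f a‖ ≤ L * ‖w - a‖ := this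
      _ ≤ L * ‖v‖ := by
          apply mul_le_mul_of_nonneg_left _ (L.coe_nonneg)
          simpa [dist_eq_norm] using mem_closedBall_iff_norm.1 hw
  have key : ‖g (a + v) - g a‖ ≤ ((L : ℝ) * ‖v‖) * ‖(a + v) - a‖ := by
    apply Convex.norm_image_sub_le_of_norm_fderiv_le
      (fun w hw => hgd w) hbound (convex_closedBall a ‖v‖) _ _
    · simp
    · simpa [dist_eq_norm] using le_refl ‖v‖
  have hsimp : g (a + v) - g a = f (a + v) - f a - fderiv ℝ f a v := by
    simp only [hg]
    have : fderiv ℝ f a (a + v) - fderiv ℝ f a a = fderiv ℝ f a v := by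
      rw [← map_sub]; congr 1; abel
    linarith [this]
  rw [hsimp] at key
  simp only [add_sub_cancel_left] at key
  have := (abs_le.1 (by simpa [Real.norm_eq_abs] using key)).2
  nlinarith [norm_nonneg v]

/-- convex-combination second-order bound -/
lemma quad_combo {f : E → ℝ} (hf : Differentiable ℝ f) {L : ℝ≥0}
    (hL : LipschitzWith L (fderiv ℝ f)) (a d : E) {lam : ℝ} (h0 : 0 ≤ lam) (h1 : lam ≤ 1) :
    lam * f (a + (1 - lam) • d) + (1 - lam) * f (a - lam • d)
      ≤ f a + L * (lam * (1 - lam) * ‖d‖ ^ 2) := by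
  have e1 := quad_upper hf hL a ((1 - lam) • d)
  have e2 := quad_upper hf hL a (-(lam • d))
  rw [← sub_eq_add_neg] at e2
  have m1 : fderiv ℝ f a ((1 - lam) • d) = (1 - lam) * fderiv ℝ f a d := by
    rw [_root_.map_smul]; rfl
  have m2 : fderiv ℝ f a (-(lam • d)) = -(lam * fderiv ℝ f a d) := by
    rw [map_neg, _root_.map_smul]; rfl
  have n1 : ‖(1 - lam) • d‖ ^ 2 = (1 - lam) ^ 2 * ‖d‖ ^ 2 := by
    rw [norm_smul, mul_pow, Real.norm_eq_abs, sq_abs]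
  have n2 : ‖-(lam • d)‖ ^ 2 = lam ^ 2 * ‖d‖ ^ 2 := by
    rw [norm_neg, norm_smul, mul_pow, Real.norm_eq_abs, sq_abs]
  rw [m1, n1] at e1
  rw [m2, n2] at e2
  nlinarith [L.coe_nonneg, norm_nonneg d, sq_nonneg (‖d‖)]

/-- exact identity for the quadratic part -/
lemma quad_identity (a d : E) (lam : ℝ) :
    lam * (1 / 2 * ‖a + (1 - lam) • d‖ ^ 2) + (1 - lam) * (1 / 2 * ‖a - lam • d‖ ^ 2)
      = 1 / 2 * ‖a‖ ^ 2 + 1 / 2 * (lam * (1 - lam) * ‖d‖ ^ 2) := by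
  have e1 : ‖a + (1 - lam) • d‖ ^ 2 = ‖a‖ ^ 2 + 2 * ((1 - lam) * ⟪a, d⟫) + (1 - lam) ^ 2 * ‖d‖ ^ 2 := by
    rw [norm_add_sq_real, real_inner_smul_right, norm_smul, mul_pow, Real.norm_eq_abs, sq_abs]
  have e2 : ‖a - lam • d‖ ^ 2 = ‖a‖ ^ 2 - 2 * (lam * ⟪a, d⟫) + lam ^ 2 * ‖d‖ ^ 2 := by
    rw [norm_sub_sq_real, real_inner_smul_right, norm_smul, mul_pow, Real.norm_eq_abs, sq_abs]
  rw [e1, e2]; ring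

/-- exact identity for the control part -/
lemma control_identity (u v : E) (lam : ℝ) :
    lam * ‖u - (1 - lam) • v‖ ^ 2 + (1 - lam) * ‖u + lam • v‖ ^ 2
      = ‖u‖ ^ 2 + lam * (1 - lam) * ‖v‖ ^ 2 := by
  have e1 : ‖u - (1 - lam) • v‖ ^ 2 = ‖u‖ ^ 2 - 2 * ((1 - lam) * ⟪u, v⟫) + (1 - lam) ^ 2 * ‖v‖ ^ 2 := by
    rw [norm_sub_sq_real, real_inner_smul_right, norm_smul, mul_pow, Real.norm_eq_abs, sq_abs]
  have e2 : ‖u + lam • v‖ ^ 2 = ‖u‖ ^ 2 + 2 * (lam * ⟪u, v⟫) + lam ^ 2 * ‖v‖ ^ 2 := by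
    rw [norm_add_sq_real, real_inner_smul_right, norm_smul, mul_pow, Real.norm_eq_abs, sq_abs]
  rw [e1, e2]; ring



lemma exists_lip_obsF (z : EuclideanSpace ℝ (Fin 2)) {σ : ℝ} (hσ : 0 < σ) :
    ∃ L : ℝ≥0, LipschitzWith L (fderiv ℝ (obsF z σ)) := by
  have h2 : ContDiff ℝ 2 (obsF z σ) := contDiff_obsF z σ (n := 2)
  have h1 : ContDiff ℝ 1 (fderiv ℝ (obsF z σ)) := by
    have := h2.fderiv_right (m := 1) (by exact_mod_cast le_refl 2)
    exact_mod_cast this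
  have hcs : HasCompactSupport (fderiv ℝ (obsF z σ)) :=
    (hasCompactSupport_obsF z hσ).fderiv (𝕜 := ℝ)
  exact ContDiff.lipschitzWith_of_hasCompactSupport hcs h1 one_ne_zero

lemma runCost_nonneg (z : EuclideanSpace ℝ (Fin 2)) (σ : ℝ) {γ : ℝ} (hγ : 0 ≤ γ)
    (y : EuclideanSpace ℝ (Fin 2)) : 0 ≤ runCost z σ γ y := by
  unfold runCost
  have := psit_nonneg z σ y
  positivity

lemma runCost_le (z : EuclideanSpace ℝ (Fin 2)) (σ : ℝ) {γ : ℝ} (hγ : 0 ≤ γ)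
    (y : EuclideanSpace ℝ (Fin 2)) : runCost z σ γ y ≤ 1 / 2 * (1 + γ) * ‖y‖ ^ 2 := by
  unfold runCost
  have h1 := psit_le_one z σ y
  have h2 := mul_le_mul_of_nonneg_left h1 (by positivity : (0:ℝ) ≤ γ * ‖y‖ ^ 2)
  nlinarith [sq_nonneg ‖y‖, psit_nonneg z σ y]

/-- Key semiconcavity estimate for the running cost. -/
lemma runCost_combo (z : EuclideanSpace ℝ (Fin 2)) {σ γ : ℝ} (hσ : 0 < σ) (hγ : 0 ≤ γ) :
    ∃ M : ℝ, 0 ≤ M ∧ ∀ (a d : EuclideanSpace ℝ (Fin 2)) (lam : ℝ), 0 ≤ lam → lam ≤ 1 →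
      lam * runCost z σ γ (a + (1 - lam) • d) + (1 - lam) * runCost z σ γ (a - lam • d)
        ≤ runCost z σ γ a + M * (lam * (1 - lam) * ‖d‖ ^ 2) := by
  obtain ⟨L, hL⟩ := exists_lip_obsF z hσ
  refine ⟨1 / 2 + γ * L, by positivity, fun a d lam h0 h1 => ?_⟩
  have hFd : Differentiable ℝ (obsF z σ) :=
    (contDiff_obsF z σ (n := 1)).differentiable (by simp)
  have hF := quad_combo hFd hL a d h0 h1
  have hq := quad_identity a d lam
  have key := runCost_eq z σ γ
  rw [key, key, key]
  have hγF := mul_le_mul_of_nonneg_left hF hγ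
  nlinarith [norm_nonneg d, sq_nonneg ‖d‖, L.coe_nonneg]




lemma exp_sq (t : ℝ) : Real.exp (-t) ^ 2 = Real.exp (-2 * t) := by
  rw [sq, ← Real.exp_add]; ring_nf

lemma exp_memL2 (c : EuclideanSpace ℝ (Fin 2)) :
    MemLp (fun t => Real.exp (-t) • c) 2 (volume.restrict (Ioi 0)) := by
  have hsm : AEStronglyMeasurable (fun t => Real.exp (-t) • c) (volume.restrict (Ioi 0)) :=
    ((Real.continuous_exp.comp continuous_neg).smul continuous_const).aestronglyMeasurable
  rw [memLp_two_iff_integrable_sq_norm hsm]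
  have hi : IntegrableOn (fun t : ℝ => Real.exp (-2 * t)) (Ioi 0) volume :=
    exp_neg_integrableOn_Ioi 0 two_pos
  apply Integrable.congr (hi.const_mul (‖c‖ ^ 2))
  filter_upwards with t
  rw [norm_smul, mul_pow, Real.norm_eq_abs, abs_of_pos (Real.exp_pos _), exp_sq]
  ring

lemma lint_exp {c : ℝ} (hc : 0 ≤ c) :
    ∫⁻ t in Ioi (0:ℝ), ENNReal.ofReal (c * Real.exp (-2 * t))
      = ENNReal.ofReal (c * ∫ t in Ioi (0:ℝ), Real.exp (-2 * t)) := by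
  rw [← MeasureTheory.integral_const_mul]
  rw [← ofReal_integral_eq_lintegral_ofReal]
  · exact ((exp_neg_integrableOn_Ioi 0 two_pos).const_mul c)
  · filter_upwards with t
    positivity

lemma memL2_integrableOn {u : ℝ → EuclideanSpace ℝ (Fin 2)} (h : MemLp u 2 (volume.restrict (Ioi 0))) (T : ℝ) :
    IntegrableOn u (Ioc 0 T) volume := by
  have h2 := h.restrict (Ioc 0 T)
  rw [Measure.restrict_restrict measurableSet_Ioc,
    inter_eq_self_of_subset_left Ioc_subset_Ioi_self] at h2
  haveI : IsFiniteMeasure (volume.restrict (Ioc (0:ℝ) T)) := by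
    constructor
    rw [Measure.restrict_apply_univ, Real.volume_Ioc]
    exact ENNReal.ofReal_lt_top
  exact h2.integrable one_le_two


lemma continuous_runCost (z : EuclideanSpace ℝ (Fin 2)) (σ γ : ℝ) :
    Continuous (runCost z σ γ) := by
  unfold runCost
  have h1 : Continuous (psit z σ) := (contDiff_psit z σ (n := 1)).continuous
  fun_prop

/-- replace a control by a strongly measurable, everywhere interval-integrable one
with the same cost. -/
lemma exists_nice_control (z : EuclideanSpace ℝ (Fin 2)) (σ γ β : ℝ)
    {u : ℝ → EuclideanSpace ℝ (Fin 2)} (hu : MemLp u 2 (volume.restrict (Ioi 0))) :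
    ∃ u' : ℝ → EuclideanSpace ℝ (Fin 2), StronglyMeasurable u' ∧
      MemLp u' 2 (volume.restrict (Ioi 0)) ∧
      (∀ a b : ℝ, IntervalIntegrable u' volume a b) ∧
      (∀ y₀, obsCost z σ γ β y₀ u' = obsCost z σ γ β y₀ u) := by
  set g := hu.1.mk u with hgdef
  have hgsm : StronglyMeasurable g := hu.1.stronglyMeasurable_mk
  set u' : ℝ → EuclideanSpace ℝ (Fin 2) := (Ioi 0).indicator g with hu'def
  have hae : u =ᵐ[volume.restrict (Ioi 0)] u' := by
    filter_upwards [hu.1.ae_eq_mk, ae_restrict_mem measurableSet_Ioi] with t h1 h2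
    rw [h1, hu'def, indicator_of_mem h2]
  have hsm' : StronglyMeasurable u' := hgsm.indicator measurableSet_Ioi
  have hmem' : MemLp u' 2 (volume.restrict (Ioi 0)) := (memLp_congr_ae hae).1 hu
  have hgmem : MemLp g 2 (volume.restrict (Ioi 0)) := (memLp_congr_ae hu.1.ae_eq_mk).1 hu
  have hint : ∀ a b : ℝ, IntervalIntegrable u' volume a b := by
    intro a b
    rw [intervalIntegrable_iff]
    have h1 : IntegrableOn u' (Set.uIoc a b) volume ↔
        IntegrableOn g (Ioi 0) (volume.restrict (Set.uIoc a b)) := by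
      rw [hu'def, IntegrableOn, integrable_indicator_iff measurableSet_Ioi]
    rw [h1, IntegrableOn, Measure.restrict_restrict measurableSet_Ioi]
    have hsub : Ioi 0 ∩ Set.uIoc a b ⊆ Ioc 0 (max a b) := by
      intro s hs
      rcases hs with ⟨hs1, hs2⟩
      rw [uIoc_eq_union] at hs2
      constructor
      · exact hs1
      · rcases hs2 with h | h
        · exact h.2.trans (le_max_right a b)
        · exact h.2.trans (le_max_left a b)
    exact (memL2_integrableOn hgmem (max a b)).mono_set hsub
  have htraj : ∀ y₀, ∀ t ∈ Ioi (0:ℝ), traj y₀ u t = traj y₀ u' t := by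
    intro y₀ t ht
    unfold traj
    congr 1
    apply intervalIntegral.integral_congr_ae
    have h2 : ∀ᵐ s ∂volume, s ∈ Ioi (0:ℝ) → u s = u' s :=
      (ae_restrict_iff' measurableSet_Ioi).1 hae
    filter_upwards [h2] with s hs hmem
    apply hs
    rw [uIoc_of_le (le_of_lt ht)] at hmem
    exact hmem.1
  refine ⟨u', hsm', hmem', hint, fun y₀ => ?_⟩
  unfold obsCost
  apply lintegral_congr_ae
  filter_upwards [ae_restrict_mem measurableSet_Ioi, hae] with t ht huv
  rw [htraj y₀ t ht, huv]

lemma traj_exp (y₀ v : EuclideanSpace ℝ (Fin 2)) : ∀ t : ℝ,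
    traj y₀ (fun s => -(Real.exp (-s) • v)) t = y₀ - (1 - Real.exp (-t)) • v := by
  intro t
  unfold traj
  have h1 : (∫ s in (0:ℝ)..t, -(Real.exp (-s) • v))
      = -((∫ s in (0:ℝ)..t, Real.exp (-s)) • v) := by
    rw [intervalIntegral.integral_neg, intervalIntegral.integral_smul_const]
  have h2 : (∫ s in (0:ℝ)..t, Real.exp (-s)) = 1 - Real.exp (-t) := by
    rw [intervalIntegral.integral_comp_neg (fun s => Real.exp s), integral_exp]
    simp
  rw [h1, h2]
  module

/-- The value function is finite everywhere. -/
lemma Vgamma_ne_top (z : EuclideanSpace ℝ (Fin 2)) {σ γ β : ℝ} (hσ : 0 < σ)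
    (hγ : 0 ≤ γ) (hβ : 0 < β) (x : EuclideanSpace ℝ (Fin 2)) :
    Vgamma z σ γ β x ≠ ⊤ := by
  set u₀ : ℝ → EuclideanSpace ℝ (Fin 2) := fun t => -(Real.exp (-t) • x) with hu₀
  have hmem : MemLp u₀ 2 (volume.restrict (Ioi 0)) := (exp_memL2 x).neg
  have hle : Vgamma z σ γ β x ≤ obsCost z σ γ β x u₀ := iInf₂_le u₀ hmem
  set c₀ : ℝ := (1/2 * (1 + γ) + β/2) * ‖x‖ ^ 2 with hc₀
  have hc₀0 : 0 ≤ c₀ := by positivity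
  have hbound : obsCost z σ γ β x u₀ ≤ ENNReal.ofReal (c₀ * ∫ t in Ioi (0:ℝ), Real.exp (-2*t)) := by
    rw [← lint_exp hc₀0]
    unfold obsCost
    apply lintegral_mono
    intro t
    apply ENNReal.ofReal_le_ofReal
    have htr : traj x u₀ t = Real.exp (-t) • x := by
      rw [hu₀, traj_exp x x t]
      module
    rw [htr]
    have h1 : runCost z σ γ (Real.exp (-t) • x) ≤ 1/2 * (1+γ) * (Real.exp (-2*t) * ‖x‖^2) := by
      have := runCost_le z σ hγ (Real.exp (-t) • x)
      rw [norm_smul, mul_pow, Real.norm_eq_abs, abs_of_pos (Real.exp_pos _), exp_sq] at this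
      linarith
    have h2 : ‖u₀ t‖ ^ 2 = Real.exp (-2*t) * ‖x‖^2 := by
      rw [hu₀]
      simp only [norm_neg]
      rw [norm_smul, mul_pow, Real.norm_eq_abs, abs_of_pos (Real.exp_pos _), exp_sq]
    rw [h2]
    rw [hc₀]
    nlinarith [hβ.le, h1]
  exact ne_top_of_le_ne_top (by exact ENNReal.ofReal_ne_top) (hle.trans hbound)


end


/-- For every `γ ≥ 0` the value function of the obstacle problem is
semiconcave with linear modulus on every compact convex subset of `ℝ²`. -/
theorem statement_13 (β σ : ℝ) (hβ : 0 < β) (hσ : 0 < σ)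
    (z : EuclideanSpace ℝ (Fin 2)) (hz1 : z 1 = 0) (hz0 : z 0 < -σ)
    (γ : ℝ) (hγ0 : 0 ≤ γ) :
    ∀ C : Set (EuclideanSpace ℝ (Fin 2)), IsCompact C → Convex ℝ C →
      ∃ K : ℝ, 0 ≤ K ∧ ∀ x ∈ C, ∀ y ∈ C, ∀ lam ∈ Icc (0 : ℝ) 1,
        lam * VgammaR z σ γ β x + (1 - lam) * VgammaR z σ γ β y
            - VgammaR z σ γ β (lam • x + (1 - lam) • y)
          ≤ K * lam * (1 - lam) * ‖x - y‖ ^ 2 := by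
  intro C _ _
  obtain ⟨M, hM0, hMcombo⟩ := runCost_combo z hσ hγ0
  set J : ℝ := ∫ t in Ioi (0:ℝ), Real.exp (-2*t) with hJdef
  have hJ0 : 0 ≤ J := integral_nonneg fun t => (Real.exp_pos _).le
  refine ⟨(M + β/2) * J, by positivity, fun x hx y hy lam hlam => ?_⟩
  obtain ⟨hlam0, hlam1⟩ := hlam
  have hlam1' : (0:ℝ) ≤ 1 - lam := by linarith
  set xl : EuclideanSpace ℝ (Fin 2) := lam • x + (1 - lam) • y with hxl
  have hcnn : (0:ℝ) ≤ (M + β/2) * (lam * (1-lam) * ‖x - y‖^2) * J := by positivity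
  -- the main inequality, proved in `ℝ≥0∞`
  have hmain : ENNReal.ofReal lam * Vgamma z σ γ β x
      + ENNReal.ofReal (1 - lam) * Vgamma z σ γ β y
      ≤ Vgamma z σ γ β xl
        + ENNReal.ofReal ((M + β/2) * (lam * (1 - lam) * ‖x - y‖^2) * J) := by
    apply ENNReal.le_of_forall_pos_le_add
    intro ε hε _
    have hVfin : Vgamma z σ γ β xl ≠ ⊤ := Vgamma_ne_top z hσ hγ0 hβ xl
    have hlt : Vgamma z σ γ β xl < Vgamma z σ γ β xl + ε :=
      ENNReal.lt_add_right hVfin (ENNReal.coe_ne_zero.2 hε.ne')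
    obtain ⟨u, hu, hcu⟩ : ∃ u, ∃ _ : MemLp u 2 (volume.restrict (Ioi 0)),
        obsCost z σ γ β xl u < Vgamma z σ γ β xl + ε := by
      have h2 := hlt
      nth_rewrite 1 [Vgamma] at h2
      simpa only [iInf_lt_iff] using h2
    obtain ⟨u', hsm', hmem', hint', hcost'⟩ := exists_nice_control z σ γ β hu
    have hu'm : Measurable u' := hsm'.measurable
    have hξc : Continuous (traj xl u') := by
      unfold traj
      exact continuous_const.add (intervalIntegral.continuous_primitive hint' 0)
    -- perturbed controls
    set ux : ℝ → EuclideanSpace ℝ (Fin 2) :=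
      fun t => u' t - Real.exp (-t) • ((1 - lam) • (x - y)) with hux
    set uy : ℝ → EuclideanSpace ℝ (Fin 2) :=
      fun t => u' t + Real.exp (-t) • (lam • (x - y)) with huy
    have hmemx : MemLp ux 2 (volume.restrict (Ioi 0)) :=
      hmem'.sub (exp_memL2 ((1 - lam) • (x - y)))
    have hmemy : MemLp uy 2 (volume.restrict (Ioi 0)) :=
      hmem'.add (exp_memL2 (lam • (x - y)))
    have hVx : Vgamma z σ γ β x ≤ obsCost z σ γ β x ux := iInf₂_le ux hmemx
    have hVy : Vgamma z σ γ β y ≤ obsCost z σ γ β y uy := iInf₂_le uy hmemy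
    -- explicit trajectories
    have hexpint : ∀ (v : EuclideanSpace ℝ (Fin 2)) (t : ℝ),
        (∫ s in (0:ℝ)..t, Real.exp (-s) • v) = (1 - Real.exp (-t)) • v := by
      intro v t
      rw [intervalIntegral.integral_smul_const]
      congr 1
      rw [intervalIntegral.integral_comp_neg (fun s => Real.exp s), integral_exp]
      simp
    have htrajx : ∀ t, traj x ux t
        = traj xl u' t + Real.exp (-t) • ((1 - lam) • (x - y)) := by
      intro t
      have h2 : Continuous fun s : ℝ => Real.exp (-s) • ((1 - lam) • (x - y)) :=
        (Real.continuous_exp.comp continuous_neg).smul continuous_const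
      simp only [traj, hux]
      rw [intervalIntegral.integral_sub (hint' 0 t) (h2.intervalIntegrable 0 t),
        hexpint, hxl]
      module
    have htrajy : ∀ t, traj y uy t
        = traj xl u' t - Real.exp (-t) • (lam • (x - y)) := by
      intro t
      have h2 : Continuous fun s : ℝ => Real.exp (-s) • (lam • (x - y)) :=
        (Real.continuous_exp.comp continuous_neg).smul continuous_const
      simp only [traj, huy]
      rw [intervalIntegral.integral_add (hint' 0 t) (h2.intervalIntegrable 0 t),
        hexpint, hxl]
      module
    -- cost integrands
    set fx : ℝ → ℝ := fun t => runCost z σ γ (traj xl u' t + Real.exp (-t) • ((1 - lam) • (x - y)))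
      + β / 2 * ‖u' t - Real.exp (-t) • ((1 - lam) • (x - y))‖ ^ 2 with hfx
    set fy : ℝ → ℝ := fun t => runCost z σ γ (traj xl u' t - Real.exp (-t) • (lam • (x - y)))
      + β / 2 * ‖u' t + Real.exp (-t) • (lam • (x - y))‖ ^ 2 with hfy
    have hocx : obsCost z σ γ β x ux = ∫⁻ t in Ioi 0, ENNReal.ofReal (fx t) := by
      unfold obsCost
      exact lintegral_congr fun t => by rw [htrajx t, hfx, hux]
    have hocy : obsCost z σ γ β y uy = ∫⁻ t in Ioi 0, ENNReal.ofReal (fy t) := by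
      unfold obsCost
      exact lintegral_congr fun t => by rw [htrajy t, hfy, huy]
    -- nonnegativity and measurability of the integrands
    have hfx0 : ∀ t, 0 ≤ fx t := fun t => by
      rw [hfx]
      have := runCost_nonneg z σ hγ0 (traj xl u' t + Real.exp (-t) • ((1 - lam) • (x - y)))
      positivity
    have hfy0 : ∀ t, 0 ≤ fy t := fun t => by
      rw [hfy]
      have := runCost_nonneg z σ hγ0 (traj xl u' t - Real.exp (-t) • (lam • (x - y)))
      positivity
    have hrc : Continuous (runCost z σ γ) := continuous_runCost z σ γ
    have hfxm : Measurable fx := by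
      rw [hfx]
      apply Measurable.add
      · exact hrc.measurable.comp
          ((hξc.add (((Real.continuous_exp.comp continuous_neg).smul continuous_const))).measurable)
      · exact (((hu'm.sub
          (((Real.continuous_exp.comp continuous_neg).smul continuous_const)).measurable).norm).pow_const 2).const_mul _
    have hfym : Measurable fy := by
      rw [hfy]
      apply Measurable.add
      · exact hrc.measurable.comp
          ((hξc.sub (((Real.continuous_exp.comp continuous_neg).smul continuous_const))).measurable)
      · exact (((hu'm.add
          (((Real.continuous_exp.comp continuous_neg).smul continuous_const)).measurable).norm).pow_const 2).const_mul _
    -- pointwise semiconcavity bound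
    have hpt : ∀ t, lam * fx t + (1 - lam) * fy t
        ≤ (runCost z σ γ (traj xl u' t) + β / 2 * ‖u' t‖ ^ 2)
          + ((M + β/2) * (lam * (1 - lam) * ‖x - y‖^2)) * Real.exp (-2*t) := by
      intro t
      have hsm1 : Real.exp (-t) • ((1 - lam) • (x - y))
          = (1 - lam) • (Real.exp (-t) • (x - y)) := smul_comm _ _ _
      have hsm2 : Real.exp (-t) • (lam • (x - y))
          = lam • (Real.exp (-t) • (x - y)) := smul_comm _ _ _
      rw [hfx, hfy]
      simp only [hsm1, hsm2]
      have hcombo := hMcombo (traj xl u' t) (Real.exp (-t) • (x - y)) lam hlam0 hlam1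
      have hctrl := control_identity (u' t) (Real.exp (-t) • (x - y)) lam
      have hw2 : ‖Real.exp (-t) • (x - y)‖ ^ 2 = Real.exp (-2*t) * ‖x - y‖ ^ 2 := by
        rw [norm_smul, mul_pow, Real.norm_eq_abs, abs_of_pos (Real.exp_pos _), exp_sq]
      rw [hw2] at hcombo hctrl
      nlinarith [hβ.le, hcombo, hctrl]
    -- the chain of inequalities in ℝ≥0∞
    have hchain : ENNReal.ofReal lam * obsCost z σ γ β x ux
        + ENNReal.ofReal (1 - lam) * obsCost z σ γ β y uy
        ≤ obsCost z σ γ β xl u'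
          + ENNReal.ofReal (((M + β/2) * (lam * (1 - lam) * ‖x - y‖^2)) * J) := by
      rw [hocx, hocy,
        ← lintegral_const_mul' (ENNReal.ofReal lam) _ ENNReal.ofReal_ne_top,
        ← lintegral_const_mul' (ENNReal.ofReal (1 - lam)) _ ENNReal.ofReal_ne_top,
        ← lintegral_add_left' ((hfxm.ennreal_ofReal.const_mul _).aemeasurable)]
      have step1 : ∫⁻ t in Ioi 0, (ENNReal.ofReal lam * ENNReal.ofReal (fx t)
            + ENNReal.ofReal (1 - lam) * ENNReal.ofReal (fy t))
          ≤ ∫⁻ t in Ioi (0:ℝ), (ENNReal.ofReal (runCost z σ γ (traj xl u' t) + β / 2 * ‖u' t‖ ^ 2)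
            + ENNReal.ofReal ((((M + β/2) * (lam * (1 - lam) * ‖x - y‖^2))) * Real.exp (-2*t))) := by
        apply lintegral_mono
        intro t
        dsimp only
        rw [← ENNReal.ofReal_mul hlam0, ← ENNReal.ofReal_mul hlam1',
          ← ENNReal.ofReal_add (mul_nonneg hlam0 (hfx0 t)) (mul_nonneg hlam1' (hfy0 t))]
        exact le_trans (ENNReal.ofReal_le_ofReal (hpt t)) ENNReal.ofReal_add_le
      refine step1.trans ?_
      have hg2 : AEMeasurable (fun t : ℝ => ENNReal.ofReal
          ((M + β/2) * (lam * (1 - lam) * ‖x - y‖^2) * Real.exp (-2*t)))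
          (volume.restrict (Ioi 0)) := by
        apply Measurable.aemeasurable
        apply Measurable.ennreal_ofReal
        exact ((measurable_id.const_mul (-2)).exp).const_mul _
      rw [lintegral_add_right' _ hg2]
      rw [lint_exp (by positivity)]
      rfl
    calc ENNReal.ofReal lam * Vgamma z σ γ β x + ENNReal.ofReal (1 - lam) * Vgamma z σ γ β y
        ≤ ENNReal.ofReal lam * obsCost z σ γ β x ux
            + ENNReal.ofReal (1 - lam) * obsCost z σ γ β y uy :=
          add_le_add (mul_le_mul_right hVx _) (mul_le_mul_right hVy _)
      _ ≤ obsCost z σ γ β xl u'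
            + ENNReal.ofReal (((M + β/2) * (lam * (1 - lam) * ‖x - y‖^2)) * J) := hchain
      _ = obsCost z σ γ β xl u
            + ENNReal.ofReal (((M + β/2) * (lam * (1 - lam) * ‖x - y‖^2)) * J) := by
          rw [hcost' xl]
      _ ≤ (Vgamma z σ γ β xl + ε)
            + ENNReal.ofReal (((M + β/2) * (lam * (1 - lam) * ‖x - y‖^2)) * J) :=
          add_le_add hcu.le le_rfl
      _ = Vgamma z σ γ β xl
            + ENNReal.ofReal ((M + β/2) * (lam * (1 - lam) * ‖x - y‖^2) * J) + ε := by
          rw [add_right_comm]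
  -- conclude in ℝ
  have hxf : Vgamma z σ γ β x ≠ ⊤ := Vgamma_ne_top z hσ hγ0 hβ x
  have hyf : Vgamma z σ γ β y ≠ ⊤ := Vgamma_ne_top z hσ hγ0 hβ y
  have hlf : Vgamma z σ γ β xl ≠ ⊤ := Vgamma_ne_top z hσ hγ0 hβ xl
  have h2 := ENNReal.toReal_mono
    (ENNReal.add_ne_top.2 ⟨hlf, ENNReal.ofReal_ne_top⟩) hmain
  rw [ENNReal.toReal_add (ENNReal.mul_ne_top ENNReal.ofReal_ne_top hxf)
      (ENNReal.mul_ne_top ENNReal.ofReal_ne_top hyf),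
    ENNReal.toReal_add hlf ENNReal.ofReal_ne_top,
    ENNReal.toReal_mul, ENNReal.toReal_mul,
    ENNReal.toReal_ofReal hlam0, ENNReal.toReal_ofReal hlam1',
    ENNReal.toReal_ofReal hcnn] at h2
  unfold VgammaR
  nlinarith [h2]
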